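/- arXiv:1910.14412 — 4 statements merged into one kernel-verified Lean document; each statement's English description precedes it below -/
import Mathlib

section
/- For complex numbers r_1, …, r_k and l ∈ {0, 1, …, k}, let Ψ_l be the k×k matrix whose rows are indexed by i ∈ {1,…,k} and whose columns are the powers r_i^m for m ∈ {0,1,…,k} \ {k−l} (in increasing order of m). Then det(Ψ_l) = e_l(r_1,…,r_k) · ∏_{1 ≤ n < m ≤ k} (r_m − r_n), where e_l is the l-th elementary symmetric polynomial. -/
/-!
Adjoin an indeterminate `X` to `r₁, …, r_k` and compute the `(k+1) × (k+1)` Vandermonde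
determinant in two ways. Expanding along the row of `X`, the coefficient of `X^(k-l)` is
`±det Ψ_l`, since deleting that row and the column of exponent `k-l` leaves `Ψ_l`. The product
formula gives `V(r) · ∏ (X - r_i)`, whose coefficient of `X^(k-l)` is `(-1)^l e_l(r) V(r)` by
Vieta's formulas; the two signs agree.
-/

open Finset Polynomial Matrix

theorem Fin.prod_Ioi_castSucc {M : Type*} [CommMonoid M] {n : ℕ} (f : Fin (n + 1) → M)
    (a : Fin n) : ∏ i > a.castSucc, f i = (∏ i > a, f i.castSucc) * f (last n) := by
  rw [← Ioc_top, top_eq_last, ← Ioo_insert_right (castSucc_lt_last a), prod_insert (by simp),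
    mul_comm, ← map_castSuccEmb_Ioi, prod_map]
  rfl

theorem Fin.val_succAbove {n : ℕ} (p : Fin (n + 1)) (q : Fin n) :
    (p.succAbove q : ℕ) = if (q : ℕ) < p then (q : ℕ) else (q : ℕ) + 1 := by
  split_ifs with h
  · rw [succAbove_of_castSucc_lt _ _ h, val_castSucc]
  · rw [succAbove_of_le_castSucc _ _ (not_lt.mp h), val_succ]

variable {R : Type*} [CommRing R]

theorem Matrix.det_vandermonde_snoc {n : ℕ} (v : Fin n → R) (x : R) :
    (vandermonde (Fin.snoc v x : Fin (n + 1) → R)).det =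
      (vandermonde v).det * ∏ i, (x - v i) := by
  have h_last : Ioi (Fin.last n) = ∅ := by simp [← Fin.top_eq_last]
  simp [det_vandermonde, Fin.prod_univ_castSucc, Fin.prod_Ioi_castSucc, prod_mul_distrib,
    h_last]

theorem Finset.prod_X_sub_C_coeff {σ : Type*} (s : Finset σ) (r : σ → R) {k : ℕ}
    (h : k ≤ #s) :
    (∏ i ∈ s, (X - C (r i))).coeff k =
      (-1) ^ (#s - k) * ∑ t ∈ s.powersetCard (#s - k), ∏ i ∈ t, r i := by
  have hmap : s.val.map (fun i => X - C (r i)) = (s.val.map r).map fun t => X - C t := by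
    rw [Multiset.map_map]; rfl
  rw [Finset.prod, hmap, Multiset.prod_X_sub_C_coeff _ (by simpa using h), Multiset.card_map,
    Finset.esymm_map_val]
  rfl

theorem Matrix.det_vandermonde_snoc_X {k : ℕ} (r : Fin k → R) :
    (vandermonde (Fin.snoc (fun i => C (r i)) X : Fin (k + 1) → R[X])).det =
      C (vandermonde r).det * ∏ i, (X - C (r i)) := by
  rw [det_vandermonde_snoc, det_vandermonde, det_vandermonde]
  simp [map_prod]

theorem Matrix.coeff_det_vandermonde_snoc_X {k : ℕ} (r : Fin k → R) (j : Fin (k + 1)) :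
    (vandermonde (Fin.snoc (fun i => C (r i)) X : Fin (k + 1) → R[X])).det.coeff j =
      (-1) ^ (k + (j : ℕ)) * (of fun i q => r i ^ (j.succAbove q : ℕ)).det := by
  set M := vandermonde (Fin.snoc (fun i => C (r i)) X : Fin (k + 1) → R[X])
  have h_minor : ∀ j' : Fin (k + 1), M.submatrix (Fin.last k).succAbove j'.succAbove =
      (C : R →+* R[X]).mapMatrix (of fun i q => r i ^ (j'.succAbove q : ℕ)) := by
    intro j'
    ext i q
    simp [M, vandermonde_apply]
  have h_term : ∀ j' : Fin (k + 1),
      (-1) ^ ((Fin.last k : ℕ) + j') * M (Fin.last k) j' *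
        (M.submatrix (Fin.last k).succAbove j'.succAbove).det =
        C ((-1) ^ (k + (j' : ℕ)) * (of fun i q => r i ^ (j'.succAbove q : ℕ)).det) *
          X ^ (j' : ℕ) := by
    intro j'
    rw [h_minor, ← RingHom.map_det]
    simp [M, vandermonde_apply]
  rw [det_succ_row _ (Fin.last k), finsetSum_coeff]
  simp only [h_term, coeff_C_mul_X_pow, Fin.val_inj, sum_ite_eq, mem_univ, if_true]

theorem Matrix.det_pow_succAbove {k : ℕ} (r : Fin k → R) (p : Fin (k + 1)) :
    (of fun i q => r i ^ (p.succAbove q : ℕ)).det =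
      (∑ t ∈ powersetCard (k - p) univ, ∏ i ∈ t, r i) * (vandermonde r).det := by
  have h_sign : (-1 : R) ^ (k + (p : ℕ)) = (-1) ^ (k - p) := by
    rw [show k + (p : ℕ) = k - p + 2 * p by omega, pow_add, pow_mul]
    simp
  have h_coeff := coeff_det_vandermonde_snoc_X r p
  rw [h_sign, det_vandermonde_snoc_X, coeff_C_mul, prod_X_sub_C_coeff _ _ (by simp [p.is_le]),
    card_univ, Fintype.card_fin] at h_coeff
  refine (isUnit_neg_one.pow (k - p)).mul_left_cancel ?_
  linear_combination -h_coeff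

/-- The determinant of the Vandermonde-like matrix `Ψ_l` (columns are powers
`r_i^m` for `m ∈ {0,…,k} \ {k−l}`, in increasing order) equals
`e_l(r) · ∏_{n<m} (r_m − r_n)`. -/
theorem gsd_psi_det (k : ℕ) (r : Fin k → ℂ) (l : ℕ) (hl : l ≤ k) :
    (Matrix.of fun (i : Fin k) (q : Fin k) =>
        r i ^ (if (q : ℕ) < k - l then (q : ℕ) else (q : ℕ) + 1)).det =
      (∑ t ∈ Finset.powersetCard l (Finset.univ : Finset (Fin k)), ∏ i ∈ t, r i) *
        ∏ i : Fin k, ∏ j ∈ Finset.Ioi i, (r j - r i) := by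
  have h := det_pow_succAbove r ⟨k - l, by omega⟩
  rw [Fin.val_mk, show k - (k - l) = l by omega, det_vandermonde] at h
  rw [← h]
  congr
  ext i q
  simp [Fin.val_succAbove]
end

section
/- Let s(n) = Σ_{i=1}^{k} a_i r_i^n where the r_i are pairwise distinct and the a_i are nonzero. For l ∈ {0,…,k}, let B_l be the k×k matrix whose columns are the vectors (s(m), s(m+1), …, s(m+k−1))ᵀ for m ∈ {0,…,k} \ {k−l}, in increasing order of m. Then det(B_l) / det(B_0) = e_l(r_1,…,r_k), the l-th elementary symmetric polynomial of the common ratios. In particular det(B_0) ≠ 0. -/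
/-!
Write `V` for the Vandermonde matrix of `r`. Then `B l = Vᵀ * diagonal a * W`, where `W` is the
generalized Vandermonde matrix with exponents `{0, …, k} \ {k - l}`. Expanding the Vandermonde
determinant of `(-X, r 1, …, r k)` along its first row shows that `det W` is the coefficient of
`X ^ (k - l)` in `det V * ∏ i, (X + r i)`, that is `e_l(r) * det V` by Vieta. Hence
`det (B l) = (det V) ^ 2 * (∏ i, a i) * e_l(r)`, and `det V ≠ 0` since the `r i` are distinct.
-/

open Polynomial Finset Matrix

namespace Matrix

variable {R : Type*} [CommRing R] {k : ℕ} (r : Fin k → R)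

theorem det_vandermonde_cons_neg_X :
    (vandermonde (Fin.cons (-X) fun i ↦ C (r i) : Fin (k + 1) → R[X])).det =
      C (vandermonde r).det * ∏ i, (X + C (r i)) := by
  simp only [det_vandermonde, Fin.prod_univ_succ, Fin.prod_Ioi_zero, Fin.prod_Ioi_succ,
    Fin.cons_zero, Fin.cons_succ, map_prod, map_sub, sub_neg_eq_add, add_comm (C _)]
  ring

-- The cofactor signs `(-1) ^ j` cancel against the powers of `-X`.
theorem det_vandermonde_cons_neg_X_eq_sum :
    (vandermonde (Fin.cons (-X) fun i ↦ C (r i) : Fin (k + 1) → R[X])).det =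
      ∑ j : Fin (k + 1), C (of fun p q ↦ r p ^ (j.succAbove q : ℕ)).det * X ^ (j : ℕ) := by
  rw [det_succ_row_zero]
  refine sum_congr rfl fun j _ ↦ ?_
  have hminor : (vandermonde (Fin.cons (-X) fun i ↦ C (r i))).submatrix Fin.succ j.succAbove =
      (C : R →+* R[X]).mapMatrix (of fun p q ↦ r p ^ (j.succAbove q : ℕ)) := by
    ext p q : 1
    simp only [submatrix_apply, vandermonde_apply, Fin.cons_succ, RingHom.mapMatrix_apply,
      map_apply, of_apply, map_pow]
  rw [hminor, ← RingHom.map_det, vandermonde_apply, Fin.cons_zero, ← mul_pow,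
    neg_one_mul, neg_neg, mul_comm]

theorem det_of_pow_succAbove (j : Fin (k + 1)) :
    (of fun p q ↦ r p ^ (j.succAbove q : ℕ)).det =
      (univ.val.map r).esymm (k - j) * (vandermonde r).det := by
  have hcoeff := congrArg (coeff · j)
    ((det_vandermonde_cons_neg_X_eq_sum r).symm.trans (det_vandermonde_cons_neg_X r))
  simp only [finsetSum_coeff, coeff_C_mul, coeff_X_pow, mul_ite, mul_one, mul_zero, Fin.val_inj,
    sum_ite_eq, mem_univ, if_true] at hcoeff
  rw [hcoeff, mul_comm, prod_eq_multiset_prod,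
    Multiset.prod_X_add_C_coeff' _ _ (by simpa using j.is_le)]
  simp

theorem det_of_pow_skip {l : ℕ} (hl : l ≤ k) :
    (of fun p q : Fin k ↦ r p ^ (if (q : ℕ) < k - l then (q : ℕ) else (q : ℕ) + 1)).det =
      (univ.val.map r).esymm l * (vandermonde r).det := by
  have hskip (q : Fin k) : ((⟨k - l, by omega⟩ : Fin (k + 1)).succAbove q : ℕ) =
      if (q : ℕ) < k - l then (q : ℕ) else (q : ℕ) + 1 := by
    simp only [Fin.succAbove, Fin.lt_def, Fin.val_castSucc]
    split_ifs <;> rfl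
  simpa [hskip, Nat.sub_sub_self hl] using det_of_pow_succAbove r ⟨k - l, by omega⟩

theorem vandermonde_transpose_mul_diagonal_mul_of_pow {n : Type*} (a : Fin k → R)
    (e : n → ℕ) :
    (vandermonde r)ᵀ * diagonal a * of (fun i q ↦ r i ^ e q) =
      of fun (p : Fin k) q ↦ ∑ i, a i * r i ^ (e q + p) := by
  ext p q
  simp only [mul_apply, transpose_apply, vandermonde_apply, diagonal_apply, of_apply, mul_ite,
    mul_zero, sum_ite_eq', mem_univ, if_true, pow_add]
  exact sum_congr rfl fun i _ ↦ by ring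

end Matrix

/-- Theorem 2 (consecutive samples): the determinant quotients of the combinatorial
matrices `B_l` equal the elementary symmetric polynomials of the common ratios. -/
theorem gsd_volume_quotients (k : ℕ) (a r : Fin k → ℂ)
    (hr : Function.Injective r) (ha : ∀ i, a i ≠ 0)
    (s : ℕ → ℂ) (hs : ∀ n, s n = ∑ i : Fin k, a i * r i ^ n)
    (B : ℕ → Matrix (Fin k) (Fin k) ℂ)
    (hB : ∀ l, B l = Matrix.of fun (p : Fin k) (q : Fin k) =>
      s ((if (q : ℕ) < k - l then (q : ℕ) else (q : ℕ) + 1) + (p : ℕ)))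
    (l : ℕ) (hl : l ≤ k) :
    (B l).det / (B 0).det =
      (∑ t ∈ Finset.powersetCard l (Finset.univ : Finset (Fin k)), ∏ i ∈ t, r i) ∧
    (B 0).det ≠ 0 := by
  obtain rfl : s = fun n ↦ ∑ i, a i * r i ^ n := funext hs
  have hdet {m : ℕ} (hm : m ≤ k) :
      (B m).det = (vandermonde r).det ^ 2 * (∏ i, a i) * (univ.val.map r).esymm m := by
    rw [hB, ← vandermonde_transpose_mul_diagonal_mul_of_pow, det_mul, det_mul, det_transpose,
      det_diagonal, det_of_pow_skip r hm]
    ring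
  have hesymm_zero : (univ.val.map r).esymm 0 = 1 := by simp [Multiset.esymm]
  have hB0 : (B 0).det ≠ 0 := by
    rw [hdet k.zero_le, hesymm_zero, mul_one]
    exact mul_ne_zero (pow_ne_zero 2 (det_vandermonde_ne_zero_iff.mpr hr))
      (prod_ne_zero_iff.mpr fun i _ ↦ ha i)
  refine ⟨?_, hB0⟩
  rw [div_eq_iff hB0, hdet hl, hdet k.zero_le, hesymm_zero, Finset.esymm_map_val]
  ring
end

section
/- Let s(n) = Σ_{i=1}^{k} a_i r_i^n with r_i pairwise distinct and a_i nonzero, and let v_l = det(B_l)/det(B_0) for l = 0,…,k, where B_l is as in Theorem 2 (so v_l = e_l(r_1,…,r_k)). Then the polynomial Σ_{n=0}^{k} (−1)^{k−n} v_{k−n} X^n equals ∏_{i=1}^{k} (X − r_i); hence its roots are exactly the common ratios r_1, …, r_k. -/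
/-!
The coefficient vector `c` of `P = ∏ i, (X - r i)` lies in the kernel of the `k × (k + 1)` Hankel
matrix `K = (s (q + p))`, since `∑ q, c q * s (q + p) = ∑ i, a i * r i ^ p * P.eval (r i) = 0`, and
`c k = 1`. Appending the row `e_k` to `K` gives a square matrix `A` with `A c = e_k`, so
`det A • c` is the last column of `adjugate A`; these are the signed maximal minors of `K`. Hence
`det B_0 * c n = (-1) ^ (k - n) * det B_(k - n)`, where `B_(k - n)` is `K` with column `n` deleted.
Finally `B_0 = Vᵀ * diagonal a * V` with `V` the Vandermonde matrix of the `r i`, so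
`det B_0 ≠ 0` and we may divide.
-/

open Polynomial Matrix Finset

namespace Matrix

theorem det_mul_apply_eq_adjugate_of_mulVec_eq_single {n R : Type*} [Fintype n]
    [DecidableEq n] [CommRing R] (A : Matrix n n R) (c : n → R) (j : n)
    (h : A *ᵥ c = Pi.single j 1) (i : n) : A.det * c i = A.adjugate i j := by
  have := congrArg (· i) (congrArg (A.adjugate *ᵥ ·) h)
  simpa [mulVec_mulVec, adjugate_mul, smul_mulVec, mulVec_single_one] using this

theorem det_submatrix_castSucc_mul_eq_of_mulVec_eq_zero {R : Type*} [CommRing R] {k : ℕ}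
    (K : Matrix (Fin k) (Fin (k + 1)) R) (c : Fin (k + 1) → R) (hc : K *ᵥ c = 0)
    (hlast : c (Fin.last k) = 1) (n : Fin (k + 1)) :
    (K.submatrix id Fin.castSucc).det * c n =
      (-1) ^ (k - n : ℕ) * (K.submatrix id n.succAbove).det := by
  set A : Matrix (Fin (k + 1)) (Fin (k + 1)) R := of (Fin.snoc (K ·) (Pi.single (Fin.last k) 1))
  have hA : A *ᵥ c = Pi.single (Fin.last k) 1 := by
    ext p
    refine Fin.lastCases ?_ (fun p => ?_) p
    · simp [A, mulVec, hlast]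
    · simpa [A, mulVec] using congrFun hc p
  have hadj (m : Fin (k + 1)) :
      A.adjugate m (Fin.last k) = (-1) ^ (k - m : ℕ) * (K.submatrix id m.succAbove).det := by
    have hsign : (-1 : R) ^ (k + m : ℕ) = (-1) ^ (k - m : ℕ) := by
      rw [show k + m = k - m + 2 * m by omega, pow_add, pow_mul, neg_one_sq, one_pow, mul_one]
    rw [adjugate_fin_succ_eq_det_submatrix, Fin.val_last, hsign]
    congr 2
    ext p q
    simp [A]
  have hcramer := A.det_mul_apply_eq_adjugate_of_mulVec_eq_single c _ hA
  have hdet : A.det = (K.submatrix id Fin.castSucc).det := by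
    rw [← mul_one A.det, ← hlast, hcramer, hadj, Fin.val_last, Nat.sub_self, pow_zero, one_mul,
      Fin.succAbove_last]
  rw [← hdet, hcramer, hadj]

section Hankel

variable {R : Type*}

def hankel (s : ℕ → R) (m n : ℕ) : Matrix (Fin m) (Fin n) R :=
  of fun p q => s (q + p)

theorem hankel_submatrix_castSucc (s : ℕ → R) (m n : ℕ) :
    (hankel s m (n + 1)).submatrix id Fin.castSucc = hankel s m n :=
  rfl

theorem hankel_submatrix_succAbove (s : ℕ → R) {k : ℕ} (n : Fin (k + 1)) :
    (hankel s k (k + 1)).submatrix id n.succAbove =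
      of fun (p q : Fin k) => s ((if (q : ℕ) < n then (q : ℕ) else q + 1) + p) := by
  ext p q
  simp only [hankel, submatrix_apply, of_apply, id]
  split_ifs with h
  · rw [Fin.succAbove_of_castSucc_lt _ _ (by simpa [Fin.lt_def] using h), Fin.val_castSucc]
  · rw [Fin.succAbove_of_le_castSucc _ _ (by simpa [Fin.le_def] using h), Fin.val_succ]

variable [CommRing R]

theorem hankel_sum_mul_pow_mulVec_coeff_eq_zero {ι : Type*} [Fintype ι] (a r : ι → R)
    {m N : ℕ} (P : R[X]) (hP : P.natDegree < N) (hroot : ∀ i, P.IsRoot (r i)) :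
    hankel (fun n => ∑ i, a i * r i ^ n) m N *ᵥ (fun q => P.coeff q) = 0 := by
  ext p
  calc ∑ q : Fin N, (∑ i, a i * r i ^ (q + p : ℕ)) * P.coeff q
      = ∑ i, a i * r i ^ (p : ℕ) * P.eval (r i) := by
        simp only [eval_eq_sum_range' hP, Finset.mul_sum, Finset.sum_mul,
          ← Fin.sum_univ_eq_sum_range (fun q => P.coeff q * r _ ^ q)]
        rw [Finset.sum_comm]
        refine sum_congr rfl fun i _ => sum_congr rfl fun q _ => ?_
        ring
    _ = 0 := by simp [(hroot _).eq_zero]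

theorem hankel_sum_mul_pow_eq {k : ℕ} (a r : Fin k → R) :
    hankel (fun n => ∑ i, a i * r i ^ n) k k = (vandermonde r)ᵀ * diagonal a * vandermonde r := by
  ext p q
  rw [mul_apply]
  simp only [hankel, of_apply, mul_diagonal, transpose_apply, vandermonde_apply, pow_add]
  exact sum_congr rfl fun i _ => by ring

end Hankel

end Matrix

/-- Equation (24): the polynomial built from the volume quotients
`v_l = det(B_l)/det(B_0)` equals `∏ i (X − r_i)`, so its roots are the ratios. -/
theorem gsd_polynomial_from_quotients (k : ℕ) (a r : Fin k → ℂ)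
    (hr : Function.Injective r) (ha : ∀ i, a i ≠ 0)
    (s : ℕ → ℂ) (hs : ∀ n, s n = ∑ i : Fin k, a i * r i ^ n)
    (B : ℕ → Matrix (Fin k) (Fin k) ℂ)
    (hB : ∀ l, B l = Matrix.of fun (p : Fin k) (q : Fin k) =>
      s ((if (q : ℕ) < k - l then (q : ℕ) else (q : ℕ) + 1) + (p : ℕ)))
    (v : ℕ → ℂ) (hv : ∀ l, v l = (B l).det / (B 0).det) :
    (∑ n ∈ Finset.range (k + 1),
        Polynomial.C ((-1 : ℂ) ^ (k - n) * v (k - n)) * Polynomial.X ^ n) =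
      ∏ i : Fin k, (Polynomial.X - Polynomial.C (r i)) := by
  obtain rfl : s = fun n => ∑ i, a i * r i ^ n := funext hs
  set P : ℂ[X] := ∏ i, (X - C (r i))
  have hdeg : P.natDegree = k := by simp [P]
  have hroot (i : Fin k) : P.IsRoot (r i) := by simp [P, eval_prod, prod_eq_zero_iff, sub_eq_zero]
  have hmonic : P.coeff k = 1 := hdeg ▸ (monic_prod_X_sub_C r univ).coeff_natDegree
  have hB_minor (n : Fin (k + 1)) :
      B (k - n) = (hankel (fun n => ∑ i, a i * r i ^ n) k (k + 1)).submatrix id n.succAbove := by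
    rw [hB, hankel_submatrix_succAbove, Nat.sub_sub_self (Fin.is_le n)]
  have hB0 : B 0 = hankel (fun n => ∑ i, a i * r i ^ n) k k := by
    simpa only [Fin.val_last, Nat.sub_self, Fin.succAbove_last, hankel_submatrix_castSucc]
      using hB_minor (Fin.last k)
  have hB0_det : (B 0).det ≠ 0 := by
    rw [hB0, hankel_sum_mul_pow_eq, det_mul, det_mul, det_transpose, det_diagonal]
    have hV := det_vandermonde_ne_zero_iff.mpr hr
    exact mul_ne_zero (mul_ne_zero hV (prod_ne_zero_iff.mpr fun i _ => ha i)) hV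
  have hcoeff (n : Fin (k + 1)) : P.coeff n = (-1) ^ (k - n : ℕ) * v (k - n) := by
    have hminors := (hankel _ k (k + 1)).det_submatrix_castSucc_mul_eq_of_mulVec_eq_zero _
      (hankel_sum_mul_pow_mulVec_coeff_eq_zero a r P (hdeg ▸ lt_add_one k) hroot) hmonic n
    rw [hankel_submatrix_castSucc, ← hB0, ← hB_minor] at hminors
    rw [hv, ← mul_div_assoc, ← hminors, mul_div_cancel_left₀ _ hB0_det]
  conv_rhs => rw [P.as_sum_range_C_mul_X_pow, hdeg]
  exact sum_congr rfl fun n hn => by rw [hcoeff ⟨n, mem_range.mp hn⟩]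
end

section
/- Let r_1, …, r_k ∈ ℂ be pairwise distinct and nonzero, let ρ_1, …, ρ_m ∈ ℂ be pairwise distinct and nonzero with m ≤ k, and let a_i, b_j be nonzero complex numbers. If Σ_{i=1}^{k} a_i r_i^n = Σ_{j=1}^{m} b_j ρ_j^n for all n ∈ {0, 1, …, k+m−1}, then m = k and there is a permutation σ of {1,…,k} with ρ_{σ(i)} = r_i and b_{σ(i)} = a_i for all i. -/
/-!
Move everything to one side: the difference of the two superpositions is a combination of
at most `k + m` geometric sequences whose first `k + m` samples vanish. Grouping equal ratios,
the invertibility of the Vandermonde matrix on the distinct ratios forces every grouped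
coefficient to vanish. As the `r i` are distinct and the `a i` nonzero, each `r i` must then
occur among the `ρ j` with the same coefficient, and `m ≤ k` turns this matching into a
bijection.
-/

open Finset Function

theorem Finset.sum_mul_comp_eq_sum_fiberwise {ι S : Type*} [CommSemiring S] [DecidableEq S]
    {s : Finset ι} {t : Finset S} {v : ι → S} (hv : ∀ i ∈ s, v i ∈ t) (c : ι → S)
    (f : S → S) :
    ∑ i ∈ s, c i * f (v i) = ∑ y ∈ t, (∑ i ∈ s with v i = y, c i) * f y := by
  rw [← sum_fiberwise_of_maps_to hv]
  refine sum_congr rfl fun y _ => ?_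
  rw [sum_mul]
  exact sum_congr rfl fun i hi => by rw [(mem_filter.1 hi).2]

variable {R : Type*} [CommRing R] [IsDomain R]

theorem Finset.eq_zero_of_forall_sum_mul_pow_eq_zero (s : Finset R) (c : R → R)
    (h : ∀ n < #s, ∑ x ∈ s, c x * x ^ n = 0) : ∀ x ∈ s, c x = 0 := by
  intro x hx
  let e := s.equivFin.symm
  have hz := Matrix.eq_zero_of_forall_pow_sum_mul_pow_eq_zero (f := fun i => (e i : R))
    (v := fun i => c (e i)) (Subtype.val_injective.comp e.injective) fun n =>
      (e.sum_comp fun x : s => c x * (x : R) ^ (n : ℕ)).trans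
        ((sum_coe_sort s _).trans (h n n.isLt))
  simpa [e] using congrFun hz (s.equivFin ⟨x, hx⟩)

theorem sum_fiber_eq_of_forall_sum_mul_pow_eq [DecidableEq R] {ι κ : Type*} [Fintype ι]
    [Fintype κ] (v c : ι → R) (w d : κ → R)
    (h : ∀ n < Fintype.card ι + Fintype.card κ, ∑ i, c i * v i ^ n = ∑ j, d j * w j ^ n)
    (i : ι) : ∑ i' with v i' = v i, c i' = ∑ j with w j = v i, d j := by
  set s := univ.image v ∪ univ.image w
  have hv : ∀ i ∈ univ, v i ∈ s := fun i _ =>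
    mem_union_left _ (mem_image_of_mem v (mem_univ i))
  have hw : ∀ j ∈ univ, w j ∈ s := fun j _ =>
    mem_union_right _ (mem_image_of_mem w (mem_univ j))
  have hcard : #s ≤ Fintype.card ι + Fintype.card κ :=
    (card_union_le _ _).trans (add_le_add card_image_le card_image_le)
  rw [← sub_eq_zero]
  refine eq_zero_of_forall_sum_mul_pow_eq_zero s
    (fun y => (∑ i' with v i' = y, c i') - ∑ j with w j = y, d j) (fun n hn => ?_) (v i)
    (hv i (mem_univ i))
  simp only [sub_mul, sum_sub_distrib, ← sum_mul_comp_eq_sum_fiberwise hv,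
    ← sum_mul_comp_eq_sum_fiberwise hw, h n (hn.trans_le hcard), sub_self]

theorem exists_eq_of_forall_sum_mul_pow_eq {ι κ : Type*} [Fintype ι] [Fintype κ]
    {r a : ι → R} {ρ b : κ → R} (hr : Injective r) (hρ : Injective ρ) (ha : ∀ i, a i ≠ 0)
    (h : ∀ n < Fintype.card ι + Fintype.card κ, ∑ i, a i * r i ^ n = ∑ j, b j * ρ j ^ n)
    (i : ι) : ∃ j, ρ j = r i ∧ b j = a i := by
  classical
  have hai : a i = ∑ j with ρ j = r i, b j := by
    simpa [hr.eq_iff, sum_filter] using sum_fiber_eq_of_forall_sum_mul_pow_eq r a ρ b h i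
  obtain ⟨j, hj, -⟩ := exists_ne_zero_of_sum_ne_zero (hai ▸ ha i)
  have hρj : ρ j = r i := (mem_filter.1 hj).2
  refine ⟨j, hρj, ?_⟩
  simp [hai, ← hρj, hρ.eq_iff, sum_filter]

theorem gsd_identifiability_general (k m : ℕ) (hm : m ≤ k)
    (r : Fin k → ℂ) (ρ : Fin m → ℂ) (a : Fin k → ℂ) (b : Fin m → ℂ)
    (hr : Function.Injective r) (hρ : Function.Injective ρ)
    (ha : ∀ i, a i ≠ 0)
    (h : ∀ n < k + m, ∑ i : Fin k, a i * r i ^ n = ∑ j : Fin m, b j * ρ j ^ n) :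
    m = k ∧ ∃ σ : Fin k ≃ Fin m, ∀ i, ρ (σ i) = r i ∧ b (σ i) = a i := by
  choose σ hσρ hσb using exists_eq_of_forall_sum_mul_pow_eq hr hρ ha (by simpa using h)
  have hσ : Injective σ :=
    Injective.of_comp (f := ρ) (by rwa [show ρ ∘ σ = r from funext hσρ])
  obtain rfl : m = k := le_antisymm hm (by simpa using Fintype.card_le_of_injective σ hσ)
  exact ⟨rfl, Equiv.ofBijective σ (Finite.injective_iff_bijective.mp hσ),
    fun i => ⟨hσρ i, hσb i⟩⟩

/-- Identifiability: two superpositions of geometric sequences with distinct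
nonzero ratios and nonzero initial terms agreeing on the first `k+m` samples
coincide up to a permutation, and in particular have the same number of terms. -/
theorem gsd_identifiability (k m : ℕ) (hm : m ≤ k)
    (r : Fin k → ℂ) (ρ : Fin m → ℂ) (a : Fin k → ℂ) (b : Fin m → ℂ)
    (hr : Function.Injective r) (hρ : Function.Injective ρ)
    (hr0 : ∀ i, r i ≠ 0) (hρ0 : ∀ j, ρ j ≠ 0)
    (ha : ∀ i, a i ≠ 0) (hb : ∀ j, b j ≠ 0)
    (h : ∀ n < k + m, ∑ i : Fin k, a i * r i ^ n = ∑ j : Fin m, b j * ρ j ^ n) :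
    m = k ∧ ∃ σ : Fin k ≃ Fin m, ∀ i, ρ (σ i) = r i ∧ b (σ i) = a i :=
  gsd_identifiability_general k m hm r ρ a b hr hρ ha h
end
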